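/- arXiv:2508.10976 — 7 statements merged into one kernel-verified Lean document; each statement's English description precedes it below -/
import Mathlib

section
/- Let F1 = (A1, att1) and F2 = (A2, att2) be argumentation frameworks and let f : A1 → A2 be a surjective map such that for all a, b ∈ A1, att2(f(a), f(b)) holds if and only if att1(a, b) holds. If E ⊆ A1 is a complete extension of F1, then the image f(E) is a complete extension of F2. -/
/-- A set `S` is conflict-free in the AF with arguments `α` and attack relation `att`. -/
def ConflictFree {α : Type*} (att : α → α → Prop) (S : Set α) : Prop :=
  ∀ a ∈ S, ∀ b ∈ S, ¬ att a b

/-- `S` defends argument `c`. -/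
def Defends {α : Type*} (att : α → α → Prop) (S : Set α) (c : α) : Prop :=
  ∀ b, att b c → ∃ a ∈ S, att a b

/-- `S` is admissible. -/
def Admissible {α : Type*} (att : α → α → Prop) (S : Set α) : Prop :=
  ConflictFree att S ∧ ∀ c ∈ S, Defends att S c

/-- `S` is a complete extension. -/
def CompleteExt {α : Type*} (att : α → α → Prop) (S : Set α) : Prop :=
  Admissible att S ∧ ∀ c, Defends att S c → c ∈ S

/-- `S` is a stable extension. -/
def StableExt {α : Type*} (att : α → α → Prop) (S : Set α) : Prop :=
  ConflictFree att S ∧ ∀ b, b ∉ S → ∃ a ∈ S, att a b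

/-- `G` is a grounded extension: a complete extension contained in every
complete extension. -/
def GroundedExt {α : Type*} (att : α → α → Prop) (G : Set α) : Prop :=
  CompleteExt att G ∧ ∀ E, CompleteExt att E → G ⊆ E

/-- `E` is a preferred extension: a ⊆-maximal complete extension. -/
def PreferredExt {α : Type*} (att : α → α → Prop) (E : Set α) : Prop :=
  CompleteExt att E ∧ ∀ E', CompleteExt att E' → E ⊆ E' → E' = E

/-- A surjective attack-reflecting-and-preserving map sends complete extensions
to complete extensions. -/
theorem image_complete {α β : Type*} (att1 : α → α → Prop) (att2 : β → β → Prop)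
    (f : α → β) (hf : Function.Surjective f)
    (hatt : ∀ a b, att2 (f a) (f b) ↔ att1 a b)
    (E : Set α) (hE : CompleteExt att1 E) : CompleteExt att2 (f '' E) := by
  obtain ⟨⟨hcf, hdef⟩, hcomp⟩ := hE
  refine ⟨⟨?_, ?_⟩, ?_⟩
  · rintro _ ⟨a, ha, rfl⟩ _ ⟨b, hb, rfl⟩
    rw [hatt]; exact hcf a ha b hb
  · rintro _ ⟨c, hc, rfl⟩ b hb
    obtain ⟨b', rfl⟩ := hf b
    obtain ⟨a, ha, haa⟩ := hdef c hc b' ((hatt _ _).mp hb)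
    exact ⟨f a, ⟨a, ha, rfl⟩, (hatt _ _).mpr haa⟩
  · intro c hc
    obtain ⟨c', rfl⟩ := hf c
    refine ⟨c', hcomp c' ?_, rfl⟩
    intro b hb
    obtain ⟨_, ⟨a, ha, rfl⟩, haa⟩ := hc (f b) ((hatt _ _).mpr hb)
    exact ⟨a, ha, (hatt _ _).mp haa⟩
end

section
/- Let F1 = (A1, att1) and F2 = (A2, att2) be argumentation frameworks and let f : A1 → A2 be a surjective map such that for all a, b ∈ A1, att2(f(a), f(b)) holds if and only if att1(a, b) holds. If E' ⊆ A2 is a complete extension of F2, then the preimage f⁻¹(E') is a complete extension of F1. -/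
/-- The preimage of a complete extension under a surjective
attack-reflecting-and-preserving map is a complete extension. -/
theorem preimage_complete {α β : Type*} (att1 : α → α → Prop) (att2 : β → β → Prop)
    (f : α → β) (hf : Function.Surjective f)
    (hatt : ∀ a b, att2 (f a) (f b) ↔ att1 a b)
    (E' : Set β) (hE' : CompleteExt att2 E') : CompleteExt att1 (f ⁻¹' E') := by
  obtain ⟨⟨hcf, hdef⟩, hcomp⟩ := hE'
  refine ⟨⟨?_, ?_⟩, ?_⟩
  · intro a ha b hb hab
    exact hcf (f a) ha (f b) hb ((hatt a b).mpr hab)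
  · intro c hc b hbc
    obtain ⟨a', ha', haa'⟩ := hdef (f c) hc (f b) ((hatt b c).mpr hbc)
    obtain ⟨a, rfl⟩ := hf a'
    exact ⟨a, ha', (hatt a b).mp haa'⟩
  · intro c hc
    apply hcomp (f c)
    intro b' hb'
    obtain ⟨b, rfl⟩ := hf b'
    obtain ⟨a, ha, hab⟩ := hc b ((hatt b c).mp hb')
    exact ⟨f a, ha, (hatt a b).mpr hab⟩
end

section
/- Let F1 = (A1, att1) and F2 = (A2, att2) be argumentation frameworks and let f : A1 → A2 be a surjective map such that for all a, b ∈ A1, att2(f(a), f(b)) holds if and only if att1(a, b) holds. Then the complete extensions of F2 are exactly the images under f of the complete extensions of F1: {f(E) | E a complete extension of F1} equals the set of complete extensions of F2. -/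
/-- The complete extensions of `F2` are exactly the images of the complete
extensions of `F1`. -/
theorem complete_image_eq {α β : Type*} (att1 : α → α → Prop) (att2 : β → β → Prop)
    (f : α → β) (hf : Function.Surjective f)
    (hatt : ∀ a b, att2 (f a) (f b) ↔ att1 a b) :
    (Set.image f) '' {E | CompleteExt att1 E} = {E' | CompleteExt att2 E'} := by
  ext E'
  simp only [Set.mem_image, Set.mem_setOf_eq]
  constructor
  · rintro ⟨E, ⟨⟨hcf, hdef⟩, hcomp⟩, rfl⟩
    refine ⟨⟨?_, ?_⟩, ?_⟩
    · rintro _ ⟨a, ha, rfl⟩ _ ⟨b, hb, rfl⟩ hab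
      exact hcf a ha b hb ((hatt a b).mp hab)
    · rintro _ ⟨c, hc, rfl⟩ b' hb'
      obtain ⟨b, rfl⟩ := hf b'
      obtain ⟨a, ha, hab⟩ := hdef c hc b ((hatt b c).mp hb')
      exact ⟨f a, ⟨a, ha, rfl⟩, (hatt a b).mpr hab⟩
    · intro c' hc'
      obtain ⟨c, rfl⟩ := hf c'
      have : Defends att1 E c := by
        intro b hb
        obtain ⟨_, ⟨a, ha, rfl⟩, hab⟩ := hc' (f b) ((hatt b c).mpr hb)
        exact ⟨a, ha, (hatt a b).mp hab⟩
      exact ⟨c, hcomp c this, rfl⟩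
  · rintro ⟨⟨hcf, hdef⟩, hcomp⟩
    refine ⟨f ⁻¹' E', ⟨⟨?_, ?_⟩, ?_⟩, Set.image_preimage_eq E' hf⟩
    · intro a ha b hb hab
      exact hcf _ ha _ hb ((hatt a b).mpr hab)
    · intro c hc b hb
      obtain ⟨a', ha', hab⟩ := hdef (f c) hc (f b) ((hatt b c).mpr hb)
      obtain ⟨a, rfl⟩ := hf a'
      exact ⟨a, ha', (hatt a b).mp hab⟩
    · intro c hc
      refine hcomp (f c) ?_
      intro b' hb'
      obtain ⟨b, rfl⟩ := hf b'
      obtain ⟨a, ha, hab⟩ := hc b ((hatt b c).mp hb')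
      exact ⟨f a, ha, (hatt a b).mpr hab⟩
end

section
/- Let F1 = (A1, att1) and F2 = (A2, att2) be argumentation frameworks and let f : A1 → A2 be a surjective map such that for all a, b ∈ A1, att2(f(a), f(b)) holds if and only if att1(a, b) holds. Then the stable extensions of F2 are exactly the images under f of the stable extensions of F1, and the preimage under f of any stable extension of F2 is a stable extension of F1. -/
/-- The stable extensions of `F2` are exactly the images of the stable
extensions of `F1`, and preimages of stable extensions of `F2` are stable
extensions of `F1`. -/
theorem stable_image_eq {α β : Type*} (att1 : α → α → Prop) (att2 : β → β → Prop)
    (f : α → β) (hf : Function.Surjective f)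
    (hatt : ∀ a b, att2 (f a) (f b) ↔ att1 a b) :
    (Set.image f) '' {E | StableExt att1 E} = {E' | StableExt att2 E'} ∧
      ∀ E', StableExt att2 E' → StableExt att1 (f ⁻¹' E') := by
  have hpre : ∀ E', StableExt att2 E' → StableExt att1 (f ⁻¹' E') := by
    rintro E' ⟨hcf, htot⟩
    constructor
    · intro a ha b hb hab
      exact hcf (f a) ha (f b) hb ((hatt a b).2 hab)
    · intro b hb
      obtain ⟨a', ha', hat⟩ := htot (f b) hb
      obtain ⟨a, rfl⟩ := hf a'
      exact ⟨a, ha', (hatt a b).1 hat⟩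
  refine ⟨Set.eq_of_subset_of_subset ?_ ?_, hpre⟩
  · rintro E' ⟨E, ⟨hcf, htot⟩, rfl⟩
    constructor
    · rintro _ ⟨a, ha, rfl⟩ _ ⟨b, hb, rfl⟩ hab
      exact hcf a ha b hb ((hatt a b).1 hab)
    · intro b' hb'
      obtain ⟨b, rfl⟩ := hf b'
      obtain ⟨a, ha, hat⟩ := htot b (fun hb => hb' ⟨b, hb, rfl⟩)
      exact ⟨f a, ⟨a, ha, rfl⟩, (hatt a b).2 hat⟩
  · intro E' hE'
    exact ⟨f ⁻¹' E', hpre E' hE', Set.image_preimage_eq E' hf⟩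
end

section
/- Let F1 = (A1, att1) and F2 = (A2, att2) be argumentation frameworks and let f : A1 → A2 be a surjective map such that for all a, b ∈ A1, att2(f(a), f(b)) holds if and only if att1(a, b) holds. If G1 is a grounded extension of F1 (a complete extension contained in every complete extension of F1), then f(G1) is a grounded extension of F2. -/
/-- The image of a grounded extension under a surjective
attack-reflecting-and-preserving map is a grounded extension. -/
theorem image_grounded {α β : Type*} (att1 : α → α → Prop) (att2 : β → β → Prop)
    (f : α → β) (hf : Function.Surjective f)
    (hatt : ∀ a b, att2 (f a) (f b) ↔ att1 a b)
    (G1 : Set α) (hG1 : GroundedExt att1 G1) : GroundedExt att2 (f '' G1) := by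
  obtain ⟨⟨⟨hcf, hdef⟩, hcomp⟩, hmin⟩ := hG1
  have preimage_complete : ∀ E : Set β, CompleteExt att2 E → CompleteExt att1 (f ⁻¹' E) := by
    intro E ⟨⟨hcf2, hdef2⟩, hcomp2⟩
    refine ⟨⟨?_, ?_⟩, ?_⟩
    · intro a ha b hb hab
      exact hcf2 (f a) ha (f b) hb ((hatt a b).mpr hab)
    · intro c hc b hbc
      obtain ⟨a2, ha2, haa⟩ := hdef2 (f c) hc (f b) ((hatt b c).mpr hbc)
      obtain ⟨a, rfl⟩ := hf a2
      exact ⟨a, ha2, (hatt a b).mp haa⟩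
    · intro c hcdef
      apply hcomp2 (f c)
      intro b2 hb2
      obtain ⟨b, rfl⟩ := hf b2
      obtain ⟨a, ha, hab⟩ := hcdef b ((hatt b c).mp hb2)
      exact ⟨f a, ha, (hatt a b).mpr hab⟩
  constructor
  · refine ⟨⟨?_, ?_⟩, ?_⟩
    · rintro _ ⟨a, ha, rfl⟩ _ ⟨b, hb, rfl⟩ hab
      exact hcf a ha b hb ((hatt a b).mp hab)
    · rintro _ ⟨c, hc, rfl⟩ b2 hb2
      obtain ⟨b, rfl⟩ := hf b2
      obtain ⟨a, ha, hab⟩ := hdef c hc b ((hatt b c).mp hb2)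
      exact ⟨f a, ⟨a, ha, rfl⟩, (hatt a b).mpr hab⟩
    · intro c2 hcdef
      obtain ⟨c, rfl⟩ := hf c2
      refine ⟨c, hcomp c ?_, rfl⟩
      intro b hbc
      obtain ⟨_, ⟨a, ha, rfl⟩, hab⟩ := hcdef (f b) ((hatt b c).mpr hbc)
      exact ⟨a, ha, (hatt a b).mp hab⟩
  · intro E hE
    have := hmin _ (preimage_complete E hE)
    rintro _ ⟨a, ha, rfl⟩
    exact this ha
end

section
/- Let F1 = (A1, att1) and F2 = (A2, att2) be argumentation frameworks and let f : A1 → A2 be a surjective map such that for all a, b ∈ A1, att2(f(a), f(b)) holds if and only if att1(a, b) holds. Then E is a preferred extension of F1 (a ⊆-maximal complete extension) if and only if there is a preferred extension E' of F2 with E = f⁻¹(E'); in particular the preferred extensions of F2 are exactly the images under f of the preferred extensions of F1. -/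
section Aux

variable {α β : Type*} (att1 : α → α → Prop) (att2 : β → β → Prop) (f : α → β)
  (hf : Function.Surjective f) (hatt : ∀ a b, att2 (f a) (f b) ↔ att1 a b)

include hatt in
lemma defends_fiber {S : Set α} {a a' : α} (h : f a = f a')
    (hd : Defends att1 S a) : Defends att1 S a' := by
  intro b hb
  exact hd b ((hatt b a).mp (h ▸ (hatt b a').mpr hb))

include hf hatt in
lemma defends_pre {E' : Set β} {a : α} :
    Defends att1 (f ⁻¹' E') a ↔ Defends att2 E' (f a) := by
  constructor
  · intro h b' hb'
    obtain ⟨b, rfl⟩ := hf b'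
    obtain ⟨a0, ha0, hatk⟩ := h b ((hatt b a).mp hb')
    exact ⟨f a0, ha0, (hatt a0 b).mpr hatk⟩
  · intro h b hb
    obtain ⟨a', ha', hatk⟩ := h (f b) ((hatt b a).mpr hb)
    obtain ⟨a0, rfl⟩ := hf a'
    exact ⟨a0, ha', (hatt a0 b).mp hatk⟩

include hf hatt in
lemma complete_pre {E' : Set β} :
    CompleteExt att1 (f ⁻¹' E') ↔ CompleteExt att2 E' := by
  constructor
  · rintro ⟨⟨hcf, hadm⟩, hcomp⟩
    refine ⟨⟨?_, ?_⟩, ?_⟩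
    · rintro a' ha' b' hb' hab
      obtain ⟨a, rfl⟩ := hf a'
      obtain ⟨b, rfl⟩ := hf b'
      exact hcf a ha' b hb' ((hatt a b).mp hab)
    · rintro c' hc'
      obtain ⟨c, rfl⟩ := hf c'
      exact (defends_pre att1 att2 f hf hatt).mp (hadm c hc')
    · rintro c' hc'
      obtain ⟨c, rfl⟩ := hf c'
      exact hcomp c ((defends_pre att1 att2 f hf hatt).mpr hc')
  · rintro ⟨⟨hcf, hadm⟩, hcomp⟩
    refine ⟨⟨?_, ?_⟩, ?_⟩
    · intro a ha b hb hab
      exact hcf (f a) ha (f b) hb ((hatt a b).mpr hab)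
    · intro c hc
      exact (defends_pre att1 att2 f hf hatt).mpr (hadm (f c) hc)
    · intro c hc
      exact hcomp (f c) ((defends_pre att1 att2 f hf hatt).mp hc)

include hatt in
lemma complete_saturated {S : Set α} (hS : CompleteExt att1 S) :
    S = f ⁻¹' (f '' S) := by
  apply Set.Subset.antisymm (Set.subset_preimage_image f S)
  rintro a ⟨a', ha', hfa⟩
  exact hS.2 a (defends_fiber att1 att2 f hatt hfa (hS.1.2 a' ha'))

end Aux

/-- `E` is a preferred extension of `F1` iff it is the preimage of a preferred
extension of `F2`; in particular the preferred extensions of `F2` are exactly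
the images of those of `F1`. -/
theorem preferred_correspondence {α β : Type*} (att1 : α → α → Prop)
    (att2 : β → β → Prop) (f : α → β) (hf : Function.Surjective f)
    (hatt : ∀ a b, att2 (f a) (f b) ↔ att1 a b) :
    (∀ E : Set α, PreferredExt att1 E ↔ ∃ E', PreferredExt att2 E' ∧ E = f ⁻¹' E') ∧
      (Set.image f) '' {E | PreferredExt att1 E} = {E' | PreferredExt att2 E'} := by
  have key : ∀ E : Set α, PreferredExt att1 E ↔ ∃ E', PreferredExt att2 E' ∧ E = f ⁻¹' E' := by
    intro E
    constructor
    · rintro ⟨hc, hmax⟩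
      have hsat := complete_saturated att1 att2 f hatt hc
      refine ⟨f '' E, ⟨(complete_pre att1 att2 f hf hatt).mp (hsat ▸ hc), ?_⟩, hsat⟩
      intro E'' hE'' hsub
      have h1 : E ⊆ f ⁻¹' E'' := hsat.trans_subset (Set.preimage_mono hsub) |>.trans (le_refl _)
      have h2 := hmax (f ⁻¹' E'') ((complete_pre att1 att2 f hf hatt).mpr hE'')
        (hsat ▸ Set.preimage_mono hsub)
      calc E'' = f '' (f ⁻¹' E'') := (Set.image_preimage_eq E'' hf).symm
        _ = f '' E := by rw [h2]
    · rintro ⟨E', ⟨hc', hmax'⟩, rfl⟩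
      refine ⟨(complete_pre att1 att2 f hf hatt).mpr hc', ?_⟩
      intro S hS hsub
      have hsat := complete_saturated att1 att2 f hatt hS
      have hSc : CompleteExt att2 (f '' S) :=
        (complete_pre att1 att2 f hf hatt).mp (hsat ▸ hS)
      have hsub' : E' ⊆ f '' S := by
        rw [← Set.image_preimage_eq E' hf]
        exact Set.image_mono hsub
      have := hmax' (f '' S) hSc hsub'
      rw [hsat, this]
  refine ⟨key, ?_⟩
  ext E'
  simp only [Set.mem_image, Set.mem_setOf_eq]
  constructor
  · rintro ⟨E, hE, rfl⟩
    obtain ⟨E', hE', rfl⟩ := (key E).mp hE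
    rwa [Set.image_preimage_eq E' hf]
  · intro hE'
    exact ⟨f ⁻¹' E', (key _).mpr ⟨E', hE', rfl⟩, Set.image_preimage_eq E' hf⟩
end

section
/- Let F1 = (A1, att1) and F2 = (A2, att2) be argumentation frameworks, let X be a set, let c1 : A1 → X and c2 : A2 → X be labeling (conclusion) maps, and let f : A1 → A2 be a surjective map such that c2 ∘ f = c1 and such that for all a, b ∈ A1, att2(f(a), f(b)) holds if and only if att1(a, b) holds. Then the families of conclusion sets of complete extensions coincide: {c1(E) | E a complete extension of F1} = {c2(E') | E' a complete extension of F2}. -/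
/-- The conclusion sets of complete extensions coincide for two AFs related by
a surjective, conclusion- and attack-preserving-and-reflecting map. -/
theorem conclusions_complete_eq {α β X : Type*} (att1 : α → α → Prop)
    (att2 : β → β → Prop) (c1 : α → X) (c2 : β → X)
    (f : α → β) (hf : Function.Surjective f) (hc : c2 ∘ f = c1)
    (hatt : ∀ a b, att2 (f a) (f b) ↔ att1 a b) :
    {Y | ∃ E, CompleteExt att1 E ∧ Y = c1 '' E} =
      {Y | ∃ E', CompleteExt att2 E' ∧ Y = c2 '' E'} := by
  ext Y
  simp only [Set.mem_setOf_eq]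
  constructor
  · rintro ⟨E, ⟨⟨hCF, hDef⟩, hComp⟩, rfl⟩
    refine ⟨f '' E, ⟨⟨?_, ?_⟩, ?_⟩, ?_⟩
    · rintro _ ⟨a, ha, rfl⟩ _ ⟨b, hb, rfl⟩ h
      exact hCF a ha b hb ((hatt a b).mp h)
    · rintro _ ⟨a, ha, rfl⟩ y hy
      obtain ⟨b, rfl⟩ := hf y
      obtain ⟨a', ha', h'⟩ := hDef a ha b ((hatt b a).mp hy)
      exact ⟨f a', ⟨a', ha', rfl⟩, (hatt a' b).mpr h'⟩
    · intro y hy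
      obtain ⟨a, rfl⟩ := hf y
      refine ⟨a, hComp a ?_, rfl⟩
      intro b hb
      obtain ⟨_, ⟨a', ha', rfl⟩, h'⟩ := hy (f b) ((hatt b a).mpr hb)
      exact ⟨a', ha', (hatt a' b).mp h'⟩
    · rw [← hc, Set.image_comp]
  · rintro ⟨E', ⟨⟨hCF, hDef⟩, hComp⟩, rfl⟩
    refine ⟨f ⁻¹' E', ⟨⟨?_, ?_⟩, ?_⟩, ?_⟩
    · intro a ha b hb h
      exact hCF (f a) ha (f b) hb ((hatt a b).mpr h)
    · intro a ha b hb
      obtain ⟨y, hy, h'⟩ := hDef (f a) ha (f b) ((hatt b a).mpr hb)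
      obtain ⟨a', rfl⟩ := hf y
      exact ⟨a', hy, (hatt a' b).mp h'⟩
    · intro a ha
      refine hComp (f a) ?_
      intro y hy
      obtain ⟨b, rfl⟩ := hf y
      obtain ⟨a', ha', h'⟩ := ha b ((hatt b a).mp hy)
      exact ⟨f a', ha', (hatt a' b).mpr h'⟩
    · rw [← hc, Set.image_comp, Set.image_preimage_eq E' hf]
end
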